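/- Let ε > 0. Suppose for each H ⊆ 𝒢 a function ĝ_H : [0, |B(H)|] → ℝ satisfies f̂_H(x) ≤ ĝ_H(x) ≤ (1+ε) · f̂_H(x) for every x ∈ [0, |B(H)|]. Let (x*_H)_{H ⊆ 𝒢} be a fractionally feasible vector minimizing ∑_{H ⊆ 𝒢} ĝ_H(x_H) over all fractionally feasible vectors, and let (opt_H)_{H ⊆ 𝒢} be an integer-feasible vector minimizing ∑_{H ⊆ 𝒢} f_H(opt_H). Set r = ⌈ ∑_{H ⊆ 𝒢} (x*_H − ⌊x*_H⌋) ⌉ and define e'_H = min( max(⌊x*_H⌋, opt_H), ⌊x*_H⌋ + r ) for every H ⊆ 𝒢. Then (e'_H)_{H ⊆ 𝒢} is integer-feasible and ∑_{H ⊆ 𝒢} f_H(e'_H) ≤ 2(1+ε) · ∑_{H ⊆ 𝒢} f_H(opt_H). -/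
import Mathlib


open scoped BigOperators ENNReal

/-- The sum of the `k` smallest elements of a multiset of reals. -/
noncomputable def sumSmallest (s : Multiset ℝ) (k : ℕ) : ℝ :=
  ((s.sort (· ≤ ·)).take k).sum

/-- The bucket `B(H)`: all sets in the family whose assigned subset of items equals `H`. -/
noncomputable def bucket {G D : Type*} [Fintype D] [DecidableEq G]
    (sets : D → Finset G) (H : Finset G) : Finset D :=
  Finset.univ.filter (fun t => sets t = H)

/-- `fH sets w H k` is the sum of the `k` smallest weights among the sets in bucket `B(H)`. -/
noncomputable def fH {G D : Type*} [Fintype D] [DecidableEq G]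
    (sets : D → Finset G) (w : D → ℝ) (H : Finset G) (k : ℕ) : ℝ :=
  sumSmallest ((bucket sets H).val.map w) k

/-- The piecewise-linear extension of `f : ℕ → ℝ`:
`plExt f x = f z + (f (z+1) - f z) * (x - z)` for `z ≤ x ≤ z + 1`, `z = ⌊x⌋`. -/
noncomputable def plExt (f : ℕ → ℝ) (x : ℝ) : ℝ :=
  f ⌊x⌋₊ + (f (⌊x⌋₊ + 1) - f ⌊x⌋₊) * (x - (⌊x⌋₊ : ℝ))

/-- An integer vector `(x_H)_{H ⊆ 𝒢}` is integer-feasible if `0 ≤ x H ≤ |B(H)|` for all `H`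
and `∑_{H ∋ g} x H ≥ Q g` for all items `g`. -/
def IntFeasible {G D : Type*} [Fintype G] [Fintype D] [DecidableEq G]
    (sets : D → Finset G) (Q : G → ℕ) (x : Finset G → ℕ) : Prop :=
  (∀ H : Finset G, x H ≤ (bucket sets H).card) ∧
  (∀ g : G, Q g ≤ ∑ H ∈ Finset.univ.filter (fun H : Finset G => g ∈ H), x H)

/-- A real vector `(x_H)_{H ⊆ 𝒢}` is fractionally feasible if `0 ≤ x H ≤ |B(H)|` for all `H`
and `∑_{H ∋ g} x H ≥ Q g` for all items `g`. -/
def FracFeasible {G D : Type*} [Fintype G] [Fintype D] [DecidableEq G]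
    (sets : D → Finset G) (Q : G → ℕ) (x : Finset G → ℝ) : Prop :=
  (∀ H : Finset G, 0 ≤ x H ∧ x H ≤ ((bucket sets H).card : ℝ)) ∧
  (∀ g : G, (Q g : ℝ) ≤ ∑ H ∈ Finset.univ.filter (fun H : Finset G => g ∈ H), x H)


lemma take_sum_mono (l : List ℝ) (h : ∀ a ∈ l, 0 ≤ a) {m n : ℕ} (hmn : m ≤ n) :
    (l.take m).sum ≤ (l.take n).sum := by
  have h1 : l.take n = l.take m ++ (l.take n).drop m := by
    conv_lhs => rw [← List.take_append_drop m (l.take n)]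
    rw [List.take_take, min_eq_left hmn]
  rw [h1, List.sum_append]
  have : 0 ≤ ((l.take n).drop m).sum :=
    List.sum_nonneg fun a ha =>
      h a (List.mem_of_mem_take (List.mem_of_mem_drop ha))
  linarith

lemma sumSmallest_nonneg (s : Multiset ℝ) (h : ∀ a ∈ s, 0 ≤ a) (k : ℕ) :
    0 ≤ sumSmallest s k :=
  List.sum_nonneg fun a ha =>
    h a ((Multiset.mem_sort _).1 (List.mem_of_mem_take ha))

lemma sumSmallest_mono (s : Multiset ℝ) (h : ∀ a ∈ s, 0 ≤ a) {m n : ℕ} (hmn : m ≤ n) :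
    sumSmallest s m ≤ sumSmallest s n :=
  take_sum_mono _ (fun a ha => h a ((Multiset.mem_sort _).1 ha)) hmn

lemma fH_mem_nonneg {G D : Type*} [Fintype D] [DecidableEq G]
    (sets : D → Finset G) (w : D → ℝ) (hw : ∀ t, 0 ≤ w t) (H : Finset G) :
    ∀ a ∈ ((bucket sets H).val.map w), 0 ≤ a := by
  intro a ha
  obtain ⟨t, _, rfl⟩ := Multiset.mem_map.1 ha
  exact hw t

lemma fH_nonneg {G D : Type*} [Fintype D] [DecidableEq G]
    (sets : D → Finset G) (w : D → ℝ) (hw : ∀ t, 0 ≤ w t) (H : Finset G) (k : ℕ) :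
    0 ≤ fH sets w H k :=
  sumSmallest_nonneg _ (fH_mem_nonneg sets w hw H) k

lemma fH_mono {G D : Type*} [Fintype D] [DecidableEq G]
    (sets : D → Finset G) (w : D → ℝ) (hw : ∀ t, 0 ≤ w t) (H : Finset G)
    {m n : ℕ} (hmn : m ≤ n) : fH sets w H m ≤ fH sets w H n :=
  sumSmallest_mono _ (fH_mem_nonneg sets w hw H) hmn


/-- Approximation guarantee of the fast LP-rounding algorithm: if each `ĝ_H` approximates
`f̂_H` within a `(1+ε)` factor and we round an optimal fractional solution of the
`ĝ`-objective, the resulting integer-feasible vector costs at most `2(1+ε)` times the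
integer optimum. -/
theorem fast_lp_rounding_approx {G D : Type*} [Fintype G] [DecidableEq G] [Fintype D]
    (sets : D → Finset G) (w : D → ℝ) (hw : ∀ t, 0 ≤ w t) (Q : G → ℕ)
    (ε : ℝ) (hε : 0 < ε)
    (ghat : Finset G → ℝ → ℝ)
    (happrox : ∀ H : Finset G, ∀ x ∈ Set.Icc (0 : ℝ) ((bucket sets H).card : ℝ),
      plExt (fH sets w H) x ≤ ghat H x ∧ ghat H x ≤ (1 + ε) * plExt (fH sets w H) x)
    (xstar : Finset G → ℝ) (hxstar : FracFeasible sets Q xstar)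
    (hxstarmin : ∀ y : Finset G → ℝ, FracFeasible sets Q y →
      ∑ H : Finset G, ghat H (xstar H) ≤ ∑ H : Finset G, ghat H (y H))
    (opt : Finset G → ℕ) (hopt : IntFeasible sets Q opt)
    (hoptmin : ∀ y : Finset G → ℕ, IntFeasible sets Q y →
      ∑ H : Finset G, fH sets w H (opt H) ≤ ∑ H : Finset G, fH sets w H (y H))
    (r : ℕ) (hr : r = ⌈∑ H : Finset G, (xstar H - (⌊xstar H⌋₊ : ℝ))⌉₊)
    (e' : Finset G → ℕ)
    (he' : ∀ H : Finset G, e' H = min (max ⌊xstar H⌋₊ (opt H)) (⌊xstar H⌋₊ + r)) :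
    IntFeasible sets Q e' ∧
    ∑ H : Finset G, fH sets w H (e' H) ≤
      2 * (1 + ε) * ∑ H : Finset G, fH sets w H (opt H) := by
  classical
  set z : Finset G → ℕ := fun H => ⌊xstar H⌋₊ with hz
  have hxnn : ∀ H, 0 ≤ xstar H := fun H => (hxstar.1 H).1
  have hxub : ∀ H, xstar H ≤ ((bucket sets H).card : ℝ) := fun H => (hxstar.1 H).2
  have hzle : ∀ H, (z H : ℝ) ≤ xstar H := fun H => Nat.floor_le (hxnn H)
  -- e' H ≥ z H always
  have he'z : ∀ H, z H ≤ e' H := by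
    intro H
    rw [he' H]
    exact le_min (le_max_left _ _) (Nat.le_add_right _ _)
  -- e' H ≤ max (z H) (opt H)
  have he'ub : ∀ H, e' H ≤ max (z H) (opt H) := fun H => by
    rw [he' H]; exact min_le_left _ _
  -- feasibility
  have hfeas : IntFeasible sets Q e' := by
    constructor
    · intro H
      refine le_trans (he'ub H) (max_le ?_ (hopt.1 H))
      have : (z H : ℝ) ≤ ((bucket sets H).card : ℝ) := le_trans (hzle H) (hxub H)
      exact_mod_cast this
    · intro g
      set S := Finset.univ.filter (fun H : Finset G => g ∈ H) with hS
      by_cases hcase : ∃ H₀ ∈ S, z H₀ + r < max (z H₀) (opt H₀)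
      · obtain ⟨H₀, hH₀S, hH₀⟩ := hcase
        have he'H₀ : e' H₀ = z H₀ + r := by
          rw [he' H₀]; exact min_eq_right (le_of_lt hH₀)
        -- real-valued bound: Q g ≤ ∑_{S} z + r
        have hreal : (Q g : ℝ) ≤ (∑ H ∈ S, (z H : ℝ)) + r := by
          have h1 : (Q g : ℝ) ≤ ∑ H ∈ S, xstar H := hxstar.2 g
          have h2 : ∑ H ∈ S, xstar H
              = (∑ H ∈ S, (z H : ℝ)) + ∑ H ∈ S, (xstar H - (z H : ℝ)) := by
            rw [← Finset.sum_add_distrib]; apply Finset.sum_congr rfl; intro H _; ring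
          have h3 : ∑ H ∈ S, (xstar H - (z H : ℝ))
              ≤ ∑ H : Finset G, (xstar H - (⌊xstar H⌋₊ : ℝ)) := by
            apply Finset.sum_le_sum_of_subset_of_nonneg (Finset.subset_univ S)
            intro H _ _
            have := hzle H; simp only [hz] at this ⊢; linarith
          have h4 : ∑ H : Finset G, (xstar H - (⌊xstar H⌋₊ : ℝ)) ≤ (r : ℝ) := by
            rw [hr]; exact Nat.le_ceil _
          linarith
        have hnat : Q g ≤ (∑ H ∈ S, z H) + r := by exact_mod_cast hreal
        refine le_trans hnat ?_
        rw [← Finset.add_sum_erase S z hH₀S, ← Finset.add_sum_erase S e' hH₀S, he'H₀]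
        have : ∑ H ∈ S.erase H₀, z H ≤ ∑ H ∈ S.erase H₀, e' H :=
          Finset.sum_le_sum fun H _ => he'z H
        omega
      · push_neg at hcase
        have : ∀ H ∈ S, opt H ≤ e' H := by
          intro H hH
          rw [he' H]
          exact le_min (le_max_right _ _) (le_trans (le_max_right _ _) (hcase H hH))
        exact le_trans (hopt.2 g) (Finset.sum_le_sum this)
  refine ⟨hfeas, ?_⟩
  -- cost bound
  have hoptnn : 0 ≤ ∑ H : Finset G, fH sets w H (opt H) :=
    Finset.sum_nonneg fun H _ => fH_nonneg sets w hw H _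
  -- Step 1: f(e' H) ≤ f(z H) + f(opt H)
  have step1 : ∀ H, fH sets w H (e' H) ≤ fH sets w H (z H) + fH sets w H (opt H) := by
    intro H
    refine le_trans (fH_mono sets w hw H (he'ub H)) ?_
    rcases max_cases (z H) (opt H) with ⟨hm, _⟩ | ⟨hm, _⟩ <;> rw [hm]
    · linarith [fH_nonneg sets w hw H (opt H)]
    · linarith [fH_nonneg sets w hw H (z H)]
  -- Step 2: f(z H) ≤ ghat H (xstar H)
  have step2 : ∀ H, fH sets w H (z H) ≤ ghat H (xstar H) := by
    intro H
    have hmem : xstar H ∈ Set.Icc (0 : ℝ) ((bucket sets H).card : ℝ) :=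
      ⟨hxnn H, hxub H⟩
    refine le_trans ?_ ((happrox H (xstar H) hmem).1)
    unfold plExt
    have h1 : fH sets w H (⌊xstar H⌋₊) ≤ fH sets w H (⌊xstar H⌋₊ + 1) :=
      fH_mono sets w hw H (Nat.le_succ _)
    have h2 : (⌊xstar H⌋₊ : ℝ) ≤ xstar H := Nat.floor_le (hxnn H)
    nlinarith
  -- Step 3: ∑ ghat (xstar) ≤ ∑ ghat (opt)
  have hoptfrac : FracFeasible sets Q (fun H => (opt H : ℝ)) := by
    constructor
    · intro H
      refine ⟨Nat.cast_nonneg _, ?_⟩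
      show ((opt H : ℝ)) ≤ _
      exact_mod_cast hopt.1 H
    · intro g
      show (Q g : ℝ) ≤ ∑ H ∈ _, ((opt H : ℝ))
      exact_mod_cast hopt.2 g
  have step3 : ∑ H : Finset G, ghat H (xstar H)
      ≤ ∑ H : Finset G, ghat H ((opt H : ℝ)) := hxstarmin _ hoptfrac
  -- Step 4: ghat H (opt H) ≤ (1+ε) * f(opt H)
  have step4 : ∀ H, ghat H ((opt H : ℝ)) ≤ (1 + ε) * fH sets w H (opt H) := by
    intro H
    have hmem : ((opt H : ℝ)) ∈ Set.Icc (0 : ℝ) ((bucket sets H).card : ℝ) :=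
      ⟨Nat.cast_nonneg _, by exact_mod_cast hopt.1 H⟩
    have h1 := (happrox H _ hmem).2
    have h2 : plExt (fH sets w H) ((opt H : ℝ)) = fH sets w H (opt H) := by
      unfold plExt
      rw [Nat.floor_natCast]
      ring
    rw [h2] at h1
    exact h1
  -- combine
  have hchain : ∑ H : Finset G, fH sets w H (z H)
      ≤ (1 + ε) * ∑ H : Finset G, fH sets w H (opt H) := by
    calc ∑ H : Finset G, fH sets w H (z H)
        ≤ ∑ H : Finset G, ghat H (xstar H) := Finset.sum_le_sum fun H _ => step2 H
      _ ≤ ∑ H : Finset G, ghat H ((opt H : ℝ)) := step3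
      _ ≤ ∑ H : Finset G, (1 + ε) * fH sets w H (opt H) :=
          Finset.sum_le_sum fun H _ => step4 H
      _ = (1 + ε) * ∑ H : Finset G, fH sets w H (opt H) := by
          rw [Finset.mul_sum]
  calc ∑ H : Finset G, fH sets w H (e' H)
      ≤ ∑ H : Finset G, (fH sets w H (z H) + fH sets w H (opt H)) :=
        Finset.sum_le_sum fun H _ => step1 H
    _ = (∑ H : Finset G, fH sets w H (z H)) + ∑ H : Finset G, fH sets w H (opt H) :=
        Finset.sum_add_distrib
    _ ≤ (1 + ε) * (∑ H : Finset G, fH sets w H (opt H))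
        + ∑ H : Finset G, fH sets w H (opt H) := by linarith
    _ ≤ 2 * (1 + ε) * ∑ H : Finset G, fH sets w H (opt H) := by nlinarith
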